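/- Let (x^{0,N}, m^{0,N}) ∈ ℝ^{dN} × ℝ^N with Σ_i m_i^{0,N} = N and m_i^{0,N} > 0, let φ : ℝ^d → ℝ^d be Lipschitz with φ(0)=0, let S be bounded, Lipschitz and skew-symmetric in a pair of arguments, and define ψ_i^{(N)}(x^N,m^N) = N ∫_{(i−1)/N}^{i/N} ψ_{S,k}(s, P_c^N x^N, P_c^N m^N) ds. Then for any T > 0 there exists a unique solution (x^N, m^N) ∈ C¹([0,T]; ℝ^{dN} × ℝ^N) of d/dt x_i^N = (1/N) Σ_j m_j^N φ(x_j^N − x_i^N), d/dt m_i^N = ψ_i^{(N)}(x^N, m^N), and it satisfies: (i) m_i^N(t) > 0 for all i and t ∈ [0,T]; (ii) Σ_{i=1}^N m_i^N(t) = N for all t ∈ [0,T]; (iii) there exist constants X̄, M̄ with ‖x_i^N(t)‖ ≤ X̄ and |m_i^N(t)| ≤ M̄ for all i, t. -/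

import Mathlib

open MeasureTheory Set Filter Topology
open scoped NNReal ENNReal

noncomputable section

abbrev Euc (d : ℕ) := EuclideanSpace ℝ (Fin d)

/-- The measure on the index space `I = [0,1]`. -/
def muI : Measure ℝ := volume.restrict (Set.Icc (0:ℝ) 1)

/-- Piecewise-constant embedding `P_c^N`. -/
def Pc {α : Type*} [AddCommMonoid α] (N : ℕ) (v : Fin N → α) : ℝ → α :=
  fun s => ∑ i : Fin N, Set.indicator (Set.Ico ((i : ℝ) / N) (((i : ℝ) + 1) / N)) (fun _ => v i) s

/-- The mass dynamics
`ψ_{S,k}(s,x,m) = m(s) ∫_{I^k} m(s_1)⋯m(s_k) S(x(s), x(s_1),…,x(s_k)) ds_1⋯ds_k`. -/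
def psiSk {d : ℕ} (k : ℕ) (S : (Fin (k+1) → Euc d) → ℝ)
    (s : ℝ) (x : ℝ → Euc d) (m : ℝ → ℝ) : ℝ :=
  m s * ∫ σ : Fin k → ℝ, (∏ l, m (σ l)) * S (Fin.cons (x s) (fun l => x (σ l)))
      ∂(Measure.pi fun _ => muI)

/-- `(x, m)` solves the discrete system on `[0,T]` with mass dynamics
`ψ_i^{(N)} = N ∫_{(i-1)/N}^{i/N} ψ_{S,k}(s, P_c^N x, P_c^N m) ds`. -/
def MicroSolS {d : ℕ} (T : ℝ) (N k : ℕ) (φ : Euc d → Euc d)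
    (S : (Fin (k+1) → Euc d) → ℝ)
    (xinit : Fin N → Euc d) (minit : Fin N → ℝ)
    (x : ℝ → Fin N → Euc d) (m : ℝ → Fin N → ℝ) : Prop :=
  x 0 = xinit ∧ m 0 = minit ∧
  ∀ t ∈ Set.Icc (0:ℝ) T, ∀ i : Fin N,
    HasDerivWithinAt (fun τ => x τ i)
      ((N : ℝ)⁻¹ • ∑ j : Fin N, m t j • φ (x t j - x t i)) (Set.Icc 0 T) t ∧
    HasDerivWithinAt (fun τ => m τ i)
      ((N : ℝ) * ∫ s in Set.Ico ((i : ℝ) / N) (((i : ℝ) + 1) / N),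
          psiSk k S s (Pc N (x t)) (Pc N (m t))) (Set.Icc 0 T) t

open Metric

/-!
The right-hand side is a polynomial in the masses and in the interaction data
`φ (x j - x i)` and `S (x ∘ w)`, which depend Lipschitz-continuously on the state, so the field
is locally Lipschitz; this gives uniqueness. For existence, precompose the field with the radial
retraction onto a large ball, which makes it globally Lipschitz and bounded, and apply
Picard–Lindelöf. Along a truncated solution the masses solve linear equations `m_i' = a_i(t) m_i`,
so they stay positive; skew-symmetry of `S` makes the mass rates sum to zero, so the total mass
is conserved; then `‖x'‖ ≤ 2 L ‖x‖` and Grönwall bounds the positions. Once the ball is larger than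
these a priori bounds, the truncation is inactive. Over the cell of index `i` the piecewise-constant
integral defining `ψ_i^{(N)}` is a finite average over index maps `Fin k → Fin N`.
-/

section RadialRetraction

variable {F : Type*} [NormedAddCommGroup F] [NormedSpace ℝ F]

-- At `y = 0` the factor is `min 1 0 = 0` (as `R / 0 = 0`), which is harmless.
def radialRetraction (R : ℝ) (y : F) : F := min 1 (R / ‖y‖) • y

variable {R : ℝ}

lemma radialRetraction_of_norm_le {y : F} (h : ‖y‖ ≤ R) : radialRetraction R y = y := by
  rcases eq_or_ne y 0 with rfl | hy
  · simp [radialRetraction]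
  · rw [radialRetraction, min_eq_left ((one_le_div (norm_pos_iff.2 hy)).2 h), one_smul]

lemma radialRetraction_eq_smul (hR : 0 ≤ R) (y : F) :
    ∃ c : ℝ, 0 ≤ c ∧ c ≤ 1 ∧ radialRetraction R y = c • y :=
  ⟨_, le_min zero_le_one (by positivity), min_le_left _ _, rfl⟩

lemma norm_radialRetraction (hR : 0 ≤ R) (y : F) : ‖radialRetraction R y‖ = min ‖y‖ R := by
  rcases eq_or_ne y 0 with rfl | hy
  · simp [radialRetraction, hR]
  · have hy' := norm_pos_iff.2 hy
    rw [radialRetraction, norm_smul, Real.norm_of_nonneg (by positivity),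
      min_mul_of_nonneg _ _ hy'.le, one_mul, div_mul_cancel₀ _ hy'.ne']

lemma norm_radialRetraction_le (hR : 0 ≤ R) (y : F) : ‖radialRetraction R y‖ ≤ R :=
  (norm_radialRetraction hR y).trans_le (min_le_right _ _)

lemma norm_radialRetraction_sub_le (hR : 0 ≤ R) {y z : F} (hzy : ‖z‖ ≤ ‖y‖) :
    ‖radialRetraction R y - radialRetraction R z‖ ≤ 2 * ‖y - z‖ := by
  rcases le_or_gt ‖y‖ R with hy | hy
  · rw [radialRetraction_of_norm_le hy, radialRetraction_of_norm_le (hzy.trans hy)]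
    linarith [norm_nonneg (y - z)]
  have hy0 : 0 < ‖y‖ := hR.trans_lt hy
  set a := R / ‖y‖
  have hry : radialRetraction R y = a • y := by
    rw [radialRetraction, min_eq_right ((div_le_one hy0).2 hy.le)]
  have ha : a ≤ 1 := (div_le_one hy0).2 hy.le
  have hz : ‖a • z - radialRetraction R z‖ ≤ ‖y‖ - ‖z‖ := by
    rcases eq_or_ne z 0 with rfl | hz
    · simp [radialRetraction, hy0.le]
    have hz0 := norm_pos_iff.2 hz
    have hac : a ≤ min 1 (R / ‖z‖) := le_min ha (div_le_div_of_nonneg_left hR hz0 hzy)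
    have hrz := norm_radialRetraction hR z
    rw [radialRetraction, norm_smul, Real.norm_of_nonneg (by positivity)] at hrz
    rw [radialRetraction, ← sub_smul, norm_smul, Real.norm_of_nonpos (by linarith), neg_sub,
      sub_mul, hrz]
    have : a * ‖y‖ = R := div_mul_cancel₀ _ hy0.ne'
    nlinarith [min_le_right ‖z‖ R]
  calc ‖radialRetraction R y - radialRetraction R z‖
      = ‖a • (y - z) + (a • z - radialRetraction R z)‖ := by rw [hry, smul_sub]; abel_nf
    _ ≤ a * ‖y - z‖ + (‖y‖ - ‖z‖) := by
        refine (norm_add_le _ _).trans (add_le_add ?_ hz)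
        rw [norm_smul, Real.norm_of_nonneg (by positivity)]
    _ ≤ 2 * ‖y - z‖ := by nlinarith [norm_nonneg (y - z), norm_sub_norm_le y z]

lemma lipschitzWith_radialRetraction (hR : 0 ≤ R) :
    LipschitzWith 2 (radialRetraction (F := F) R) := by
  refine LipschitzWith.of_dist_le_mul fun y z => ?_
  rw [dist_eq_norm, dist_eq_norm, NNReal.coe_ofNat]
  rcases le_total ‖z‖ ‖y‖ with h | h
  · exact norm_radialRetraction_sub_le hR h
  · rw [norm_sub_rev, norm_sub_rev y]
    exact norm_radialRetraction_sub_le hR h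

end RadialRetraction

section ODE

variable {E F : Type*} [NormedAddCommGroup E] [NormedSpace ℝ E] [NormedAddCommGroup F]
  [NormedSpace ℝ F] {a b : ℝ}

lemma HasDerivWithinAt.fst {f : ℝ → E × F} {f' : E × F} {s : Set ℝ} {t : ℝ}
    (h : HasDerivWithinAt f f' s t) : HasDerivWithinAt (fun τ => (f τ).1) f'.1 s t :=
  (ContinuousLinearMap.fst ℝ E F).hasFDerivAt.comp_hasDerivWithinAt t h

lemma HasDerivWithinAt.snd {f : ℝ → E × F} {f' : E × F} {s : Set ℝ} {t : ℝ}
    (h : HasDerivWithinAt f f' s t) : HasDerivWithinAt (fun τ => (f τ).2) f'.2 s t :=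
  (ContinuousLinearMap.snd ℝ E F).hasFDerivAt.comp_hasDerivWithinAt t h

lemma HasDerivWithinAt.Ici_of_Icc {f : ℝ → E} {f' : E} {t : ℝ}
    (h : HasDerivWithinAt f f' (Icc a b) t) (ht : t ∈ Ico a b) :
    HasDerivWithinAt f f' (Ici t) t :=
  h.mono_of_mem_nhdsWithin (Icc_mem_nhdsGE_of_mem ht)

lemma HasDerivWithinAt.Iic_of_Icc {f : ℝ → E} {f' : E} {t : ℝ}
    (h : HasDerivWithinAt f f' (Icc a b) t) (ht : t ∈ Ioc a b) :
    HasDerivWithinAt f f' (Iic t) t :=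
  h.mono_of_mem_nhdsWithin (Icc_mem_nhdsLE_of_mem ht)

lemma ContinuousOn.of_forall_mem_Icc_hasDerivWithinAt {f f' : ℝ → E}
    (hf : ∀ t ∈ Icc a b, HasDerivWithinAt f (f' t) (Icc a b) t) : ContinuousOn f (Icc a b) :=
  fun t ht => (hf t ht).continuousWithinAt

lemma exists_forall_mem_Icc_hasDerivWithinAt_of_lipschitzWith [CompleteSpace E] {v : E → E}
    {K C : ℝ≥0} (hv : LipschitzWith K v) (hC : ∀ x, ‖v x‖ ≤ C) (hab : a ≤ b) (x₀ : E) :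
    ∃ α : ℝ → E, α a = x₀ ∧ ∀ t ∈ Icc a b, HasDerivWithinAt α (v (α t)) (Icc a b) t := by
  have hpl : IsPicardLindelof (fun _ => v) ⟨a, left_mem_Icc.2 hab⟩ x₀
      (C * (b - a).toNNReal) 0 C K :=
    { lipschitzOnWith := fun _ _ => hv.lipschitzOnWith
      continuousOn := fun _ _ => continuousOn_const
      norm_le := fun _ _ x _ => hC x
      mul_max_le := by
        simp [max_eq_left (sub_nonneg.2 hab), Real.coe_toNNReal _ (sub_nonneg.2 hab)] }
  exact hpl.exists_eq_forall_mem_Icc_hasDerivWithinAt₀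

lemma eq_of_forall_mem_Icc_hasDerivWithinAt_zero {f : ℝ → E}
    (hf : ∀ t ∈ Icc a b, HasDerivWithinAt f 0 (Icc a b) t) : ∀ t ∈ Icc a b, f t = f a :=
  constant_of_has_deriv_right_zero (.of_forall_mem_Icc_hasDerivWithinAt hf)
    fun t ht => (hf t (Ico_subset_Icc_self ht)).Ici_of_Icc ht

lemma norm_le_mul_exp_of_norm_deriv_le {f f' : ℝ → E} {K : ℝ}
    (hf : ∀ t ∈ Icc a b, HasDerivWithinAt f (f' t) (Icc a b) t)
    (hK : ∀ t ∈ Icc a b, ‖f' t‖ ≤ K * ‖f t‖) :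
    ∀ t ∈ Icc a b, ‖f t‖ ≤ ‖f a‖ * Real.exp (K * (t - a)) := by
  intro t ht
  simpa only [gronwallBound_ε0] using norm_le_gronwallBound_of_norm_deriv_right_le (K := K)
    (ε := 0) (.of_forall_mem_Icc_hasDerivWithinAt hf)
    (fun s hs => (hf s (Ico_subset_Icc_self hs)).Ici_of_Icc hs) le_rfl
    (fun s hs => by simpa using hK s (Ico_subset_Icc_self hs)) t ht

/-- By backward uniqueness for `f' = c f`, a zero of `f` would force `f a = 0`. -/
lemma pos_of_forall_mem_Icc_hasDerivWithinAt_mul {f c : ℝ → ℝ} {K : ℝ≥0}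
    (hf : ∀ t ∈ Icc a b, HasDerivWithinAt f (c t * f t) (Icc a b) t)
    (hc : ∀ t ∈ Icc a b, |c t| ≤ K) (ha : 0 < f a) : ∀ t ∈ Icc a b, 0 < f t := by
  have hcont := ContinuousOn.of_forall_mem_Icc_hasDerivWithinAt hf
  have hne : ∀ t ∈ Icc a b, f t ≠ 0 := by
    intro t ht hft
    have hsub : Icc a t ⊆ Icc a b := Icc_subset_Icc_right ht.2
    have hlip : ∀ s ∈ Ioc a t, LipschitzOnWith K (c s * ·) univ := fun s hs => by
      refine ((lipschitzWith_smul (c s)).weaken ?_).lipschitzOnWith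
      rw [← NNReal.coe_le_coe, coe_nnnorm, Real.norm_eq_abs]
      exact hc s (hsub (Ioc_subset_Icc_self hs))
    have hzero : ∀ s ∈ Ioc a t, HasDerivWithinAt (0 : ℝ → ℝ) (c s * 0) (Iic s) s := fun s _ => by
      rw [mul_zero]; exact hasDerivWithinAt_const s _ 0
    exact ha.ne' <| ODE_solution_unique_of_mem_Icc_left hlip (hcont.mono hsub)
      (fun s hs => ((hf s (hsub (Ioc_subset_Icc_self hs))).mono hsub).Iic_of_Icc hs)
      (fun _ _ => trivial) continuousOn_const hzero (fun _ _ => trivial) hft (left_mem_Icc.2 ht.1)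
  intro t ht
  by_contra! hft
  obtain ⟨s, hs, hfs⟩ := intermediate_value_Icc' ht.1 (hcont.mono (Icc_subset_Icc_right ht.2))
    ⟨hft, ha.le⟩
  exact hne s (Icc_subset_Icc_right ht.2 hs) hfs

variable [ProperSpace E] {v : E → E}

lemma LocallyLipschitz.exists_forall_mem_Icc_hasDerivWithinAt_comp_radialRetraction
    (hv : LocallyLipschitz v) {R : ℝ} (hR : 0 ≤ R) (hab : a ≤ b) (x₀ : E) :
    ∃ α : ℝ → E, α a = x₀ ∧
      ∀ t ∈ Icc a b, HasDerivWithinAt α (v (radialRetraction R (α t))) (Icc a b) t := by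
  obtain ⟨K, hK⟩ := hv.locallyLipschitzOn.exists_lipschitzOnWith_of_compact
    (isCompact_closedBall (0 : E) R)
  obtain ⟨C, hC⟩ := (isCompact_closedBall (0 : E) R).exists_bound_of_continuousOn
    hv.continuous.continuousOn
  have hmaps : MapsTo (radialRetraction R) univ (closedBall (0 : E) R) := fun y _ =>
    mem_closedBall_zero_iff.2 (norm_radialRetraction_le hR y)
  refine exists_forall_mem_Icc_hasDerivWithinAt_of_lipschitzWith (C := C.toNNReal)
    (lipschitzOnWith_univ.1 (hK.comp (lipschitzWith_radialRetraction hR).lipschitzOnWith hmaps))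
    (fun y => (hC _ (hmaps trivial)).trans (Real.le_coe_toNNReal C)) hab x₀

lemma LocallyLipschitz.eqOn_of_forall_mem_Icc_hasDerivWithinAt (hv : LocallyLipschitz v)
    {f g : ℝ → E} (hf : ∀ t ∈ Icc a b, HasDerivWithinAt f (v (f t)) (Icc a b) t)
    (hg : ∀ t ∈ Icc a b, HasDerivWithinAt g (v (g t)) (Icc a b) t) (ha : f a = g a) :
    EqOn f g (Icc a b) := by
  have hfc := ContinuousOn.of_forall_mem_Icc_hasDerivWithinAt hf
  have hgc := ContinuousOn.of_forall_mem_Icc_hasDerivWithinAt hg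
  obtain ⟨Bf, hBf⟩ := isCompact_Icc.exists_bound_of_continuousOn hfc
  obtain ⟨Bg, hBg⟩ := isCompact_Icc.exists_bound_of_continuousOn hgc
  obtain ⟨K, hK⟩ := hv.locallyLipschitzOn.exists_lipschitzOnWith_of_compact
    (isCompact_closedBall (0 : E) (max Bf Bg))
  refine ODE_solution_unique_of_mem_Icc_right (fun _ _ => hK) hfc
    (fun t ht => (hf t (Ico_subset_Icc_self ht)).Ici_of_Icc ht) (fun t ht => ?_) hgc
    (fun t ht => (hg t (Ico_subset_Icc_self ht)).Ici_of_Icc ht) (fun t ht => ?_) ha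
  · exact mem_closedBall_zero_iff.2 ((hBf t (Ico_subset_Icc_self ht)).trans (le_max_left _ _))
  · exact mem_closedBall_zero_iff.2 ((hBg t (Ico_subset_Icc_self ht)).trans (le_max_right _ _))

end ODE

lemma LipschitzWith.pi {α ι : Type*} {β : ι → Type*} [PseudoEMetricSpace α] [Fintype ι]
    [∀ i, PseudoEMetricSpace (β i)] {f : α → ∀ i, β i} {K : ℝ≥0}
    (hf : ∀ i, LipschitzWith K fun a => f a i) : LipschitzWith K f :=
  fun x y => edist_pi_le_iff.2 fun i => hf i x y

lemma lipschitzWith_of_abs_sub_le_mul_sum_norm {ι E : Type*} [Fintype ι]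
    [SeminormedAddCommGroup E] {f : (ι → E) → ℝ} {L : ℝ}
    (hf : ∀ y z, |f y - f z| ≤ L * ∑ i, ‖y i - z i‖) :
    LipschitzWith (L.toNNReal * Fintype.card ι) f := by
  refine LipschitzWith.of_dist_le_mul fun y z => ?_
  have hsum : ∑ i, ‖y i - z i‖ ≤ Fintype.card ι * dist y z := by
    have h : ∀ i, ‖y i - z i‖ ≤ dist y z := fun i => by
      rw [← dist_eq_norm]; exact dist_le_pi_dist y z i
    simpa using Finset.sum_le_sum fun i (_ : i ∈ Finset.univ) => h i
  calc dist (f y) (f z) ≤ L * ∑ i, ‖y i - z i‖ := by rw [Real.dist_eq]; exact hf y z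
    _ ≤ L.toNNReal * (Fintype.card ι * dist y z) :=
        mul_le_mul (Real.le_coe_toNNReal L) hsum (Finset.sum_nonneg fun i _ => norm_nonneg _)
          L.toNNReal.coe_nonneg
    _ = _ := by push_cast; ring

lemma sum_eq_zero_of_comp_swap_eq_neg {ι α : Type*} [Fintype ι] [DecidableEq ι] [Fintype α]
    {W : (ι → α) → ℝ} {a b : ι} (hW : ∀ w, W (w ∘ Equiv.swap a b) = -W w) :
    ∑ w, W w = 0 := by
  have hinv : Function.Involutive (· ∘ Equiv.swap a b : (ι → α) → ι → α) := fun w => by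
    ext; simp
  have h := hinv.bijective.sum_comp W
  simp only [hW, Finset.sum_neg_distrib] at h
  linarith

lemma pi_norm_le_sum_of_nonneg {ι : Type*} [Fintype ι] {m : ι → ℝ} (hm : ∀ i, 0 ≤ m i) :
    ‖m‖ ≤ ∑ i, m i :=
  pi_norm_le_iff_of_nonneg (Finset.sum_nonneg fun i _ => hm i) |>.2 fun i => by
    rw [Real.norm_of_nonneg (hm i)]
    exact Finset.single_le_sum (fun j _ => hm j) (Finset.mem_univ i)

section Field

variable {E X : Type*} [NormedAddCommGroup E] [NormedSpace ℝ E] {N k : ℕ}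

def velocity (φ : E → E) (x : Fin N → E) (m : Fin N → ℝ) : Fin N → E :=
  fun i => (N : ℝ)⁻¹ • ∑ j, m j • φ (x j - x i)

-- With `massRate` below this is the discrete `ψ_i^{(N)}`: `Fin.cons i j` lists the cells of
-- `(s, s_1, …, s_k)`.
def meanInteraction (S : (Fin (k + 1) → X) → ℝ) (x : Fin N → X) (m : Fin N → ℝ) (i : Fin N) :
    ℝ :=
  ((N : ℝ) ^ k)⁻¹ * ∑ j : Fin k → Fin N, (∏ l, m (j l)) * S (x ∘ Fin.cons i j)

def massRate (S : (Fin (k + 1) → X) → ℝ) (x : Fin N → X) (m : Fin N → ℝ) (i : Fin N) : ℝ :=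
  m i * meanInteraction S x m i

def microField (φ : E → E) (S : (Fin (k + 1) → E) → ℝ) (p : (Fin N → E) × (Fin N → ℝ)) :
    (Fin N → E) × (Fin N → ℝ) :=
  (velocity φ p.1 p.2, massRate S p.1 p.2)

lemma sum_massRate_eq_zero {S : (Fin (k + 1) → X) → ℝ}
    (hS : ∃ a b : Fin (k + 1), ∀ y, S y = -S (y ∘ Equiv.swap a b)) (x : Fin N → X)
    (m : Fin N → ℝ) : ∑ i, massRate S x m i = 0 := by
  obtain ⟨a, b, hab⟩ := hS
  set W : (Fin (k + 1) → Fin N) → ℝ := fun w => (∏ l, m (w l)) * S (x ∘ w)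
  have hW : ∀ w, W (w ∘ Equiv.swap a b) = -W w := fun w => by
    simp only [W, Function.comp_apply, Equiv.prod_comp (Equiv.swap a b) (fun l => m (w l))]
    rw [hab (x ∘ w), neg_mul_eq_mul_neg, neg_neg]
    rfl
  have hcons : ∀ i j, m i * ((∏ l, m (j l)) * S (x ∘ Fin.cons i j)) = W (Fin.cons i j) :=
    fun i j => by simp [W, Fin.prod_univ_succ, mul_assoc]
  calc ∑ i, massRate S x m i = ((N : ℝ) ^ k)⁻¹ * ∑ i, ∑ j, W (Fin.cons i j) := by
        simp only [massRate, meanInteraction, Finset.mul_sum, ← hcons]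
        exact Finset.sum_congr rfl fun i _ => Finset.sum_congr rfl fun j _ => by ring
    _ = ((N : ℝ) ^ k)⁻¹ * ∑ w, W w := by
        rw [← Fintype.sum_prod_type', ← (Fin.consEquiv fun _ => Fin N).sum_comp W]
        rfl
    _ = 0 := by rw [sum_eq_zero_of_comp_swap_eq_neg hW, mul_zero]

lemma continuous_meanInteraction [TopologicalSpace X] {S : (Fin (k + 1) → X) → ℝ}
    (hS : Continuous S) (i : Fin N) :
    Continuous fun p : (Fin N → X) × (Fin N → ℝ) => meanInteraction S p.1 p.2 i := by
  unfold meanInteraction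
  fun_prop

lemma norm_velocity_le {φ : E → E} {K : ℝ≥0} (hφ : LipschitzWith K φ) (hφ0 : φ 0 = 0)
    (x : Fin N → E) (m : Fin N → ℝ) :
    ‖velocity φ x m‖ ≤ 2 * K * ((N : ℝ)⁻¹ * ∑ j, |m j|) * ‖x‖ := by
  refine pi_norm_le_iff_of_nonneg (by positivity) |>.2 fun i => ?_
  have hterm : ∀ j, ‖m j • φ (x j - x i)‖ ≤ |m j| * (2 * K * ‖x‖) := fun j => by
    rw [norm_smul, Real.norm_eq_abs]
    gcongr
    calc ‖φ (x j - x i)‖ ≤ K * ‖x j - x i‖ := hφ.norm_le_mul hφ0 _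
      _ ≤ K * (‖x‖ + ‖x‖) := by
          gcongr
          exact (norm_sub_le _ _).trans (add_le_add (norm_le_pi_norm x j) (norm_le_pi_norm x i))
      _ = 2 * K * ‖x‖ := by ring
  calc ‖velocity φ x m i‖ ≤ (N : ℝ)⁻¹ * ∑ j, |m j| * (2 * K * ‖x‖) := by
        rw [velocity, norm_smul, Real.norm_of_nonneg (by positivity)]
        gcongr
        exact (norm_sum_le _ _).trans (Finset.sum_le_sum fun j _ => hterm j)
    _ = 2 * K * ((N : ℝ)⁻¹ * ∑ j, |m j|) * ‖x‖ := by rw [← Finset.sum_mul]; ring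

lemma norm_velocity_smul_le (hN : 0 < N) {φ : E → E} {K : ℝ≥0} (hφ : LipschitzWith K φ)
    (hφ0 : φ 0 = 0) {c : ℝ} (hc0 : 0 ≤ c) (hc1 : c ≤ 1) (x : Fin N → E) {m : Fin N → ℝ}
    (hm : ∀ j, 0 ≤ m j) (hsum : ∑ j, m j = N) : ‖velocity φ (c • x) (c • m)‖ ≤ 2 * K * ‖x‖ := by
  have hmass : (N : ℝ)⁻¹ * ∑ j, |c * m j| ≤ 1 := by
    calc (N : ℝ)⁻¹ * ∑ j, |c * m j| ≤ (N : ℝ)⁻¹ * ∑ j, m j := by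
          gcongr with j
          rw [abs_of_nonneg (mul_nonneg hc0 (hm j))]
          exact mul_le_of_le_one_left (hm j) hc1
      _ = 1 := by rw [hsum, inv_mul_cancel₀ (Nat.cast_pos.2 hN).ne']
  calc ‖velocity φ (c • x) (c • m)‖ ≤ 2 * K * ((N : ℝ)⁻¹ * ∑ j, |c * m j|) * ‖c • x‖ :=
        norm_velocity_le hφ hφ0 _ _
    _ ≤ 2 * K * 1 * ‖x‖ := by
        gcongr
        rw [norm_smul, Real.norm_of_nonneg hc0]
        exact mul_le_of_le_one_left (norm_nonneg _) hc1
    _ = 2 * K * ‖x‖ := by ring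

lemma locallyLipschitz_microField {φ : E → E} {S : (Fin (k + 1) → E) → ℝ} {Kφ KS : ℝ≥0}
    (hφ : LipschitzWith Kφ φ) (hS : LipschitzWith KS S) :
    LocallyLipschitz (microField φ S : (Fin N → E) × (Fin N → ℝ) → _) := by
  let B : (Fin N → ℝ) × (Fin N → Fin N → E) × (Fin N → (Fin k → Fin N) → ℝ) →
      (Fin N → E) × (Fin N → ℝ) := fun q =>
    (fun i => (N : ℝ)⁻¹ • ∑ j, q.1 j • q.2.1 i j,
      fun i => q.1 i * (((N : ℝ) ^ k)⁻¹ * ∑ j : Fin k → Fin N, (∏ l, q.1 (j l)) * q.2.2 i j))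
  have hB : ContDiff ℝ 1 B := by fun_prop
  have hx : ∀ σ : Fin (k + 1) → Fin N,
      LipschitzWith (1 * 1) fun p : (Fin N → E) × (Fin N → ℝ) => p.1 ∘ σ :=
    fun σ => LipschitzWith.pi fun l => (LipschitzWith.eval (σ l)).comp LipschitzWith.prod_fst
  have hu : LipschitzWith (Kφ * (1 * 1 + 1 * 1))
      fun p : (Fin N → E) × (Fin N → ℝ) => fun i j => φ (p.1 j - p.1 i) :=
    LipschitzWith.pi fun i => LipschitzWith.pi fun j => hφ.comp
      (((LipschitzWith.eval j).comp LipschitzWith.prod_fst).sub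
        ((LipschitzWith.eval i).comp LipschitzWith.prod_fst))
  have hw : LipschitzWith (KS * (1 * 1)) fun p : (Fin N → E) × (Fin N → ℝ) =>
      fun i (j : Fin k → Fin N) => S (p.1 ∘ Fin.cons i j) :=
    LipschitzWith.pi fun i => LipschitzWith.pi fun j => hS.comp (hx _)
  have hL := LipschitzWith.prod_snd.prodMk (hu.prodMk hw)
  have hcomp : (microField φ S : (Fin N → E) × (Fin N → ℝ) → _) = B ∘ fun p =>
      (p.2, (fun i j => φ (p.1 j - p.1 i)), fun i (j : Fin k → Fin N) => S (p.1 ∘ Fin.cons i j)) :=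
    rfl
  rw [hcomp]
  exact hB.locallyLipschitz.comp hL.locallyLipschitz

end Field

section Cells

variable {N : ℕ}

-- The paper's `[(i - 1) / N, i / N)`, with `0`-based index `i`.
def cell (N i : ℕ) : Set ℝ := Ico ((i : ℝ) / N) (((i : ℝ) + 1) / N)

lemma mem_cell_iff (hN : 0 < N) {i : ℕ} {s : ℝ} : s ∈ cell N i ↔ 0 ≤ s ∧ ⌊s * N⌋₊ = i := by
  have hN' : (0 : ℝ) < N := Nat.cast_pos.2 hN
  rw [cell, mem_Ico, div_le_iff₀ hN', lt_div_iff₀ hN']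
  constructor
  · rintro ⟨h1, h2⟩
    have hs : 0 ≤ s := nonneg_of_mul_nonneg_left ((Nat.cast_nonneg i).trans h1) hN'
    exact ⟨hs, (Nat.floor_eq_iff (by positivity)).2 ⟨h1, h2⟩⟩
  · rintro ⟨hs, h⟩
    exact (Nat.floor_eq_iff (by positivity)).1 h

lemma eq_of_mem_cell (hN : 0 < N) {i j : Fin N} {s : ℝ} (hi : s ∈ cell N i) (hj : s ∈ cell N j) :
    i = j :=
  Fin.ext (((mem_cell_iff hN).1 hi).2.symm.trans ((mem_cell_iff hN).1 hj).2)

lemma exists_mem_cell (hN : 0 < N) {s : ℝ} (hs : s ∈ Ico (0 : ℝ) 1) :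
    ∃ i : Fin N, s ∈ cell N i := by
  have hN' : (0 : ℝ) < N := Nat.cast_pos.2 hN
  refine ⟨⟨⌊s * N⌋₊, (Nat.floor_lt (mul_nonneg hs.1 hN'.le)).2 ?_⟩,
    (mem_cell_iff hN).2 ⟨hs.1, rfl⟩⟩
  nlinarith [hs.2]

lemma cell_subset_Ico (i : Fin N) : cell N i ⊆ Ico 0 1 := by
  have hN' : (0 : ℝ) < N := Nat.cast_pos.2 (i.pos)
  refine Ico_subset_Ico (div_nonneg (Nat.cast_nonneg _) hN'.le) ((div_le_one hN').2 ?_)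
  exact_mod_cast i.isLt

lemma Pc_of_mem_cell {α : Type*} [AddCommMonoid α] (hN : 0 < N) (v : Fin N → α) {i : Fin N}
    {s : ℝ} (hs : s ∈ cell N i) : Pc N v s = v i := by
  change ∑ j : Fin N, (cell N j).indicator (fun _ => v j) s = v i
  rw [Finset.sum_eq_single i (fun j _ hj => indicator_of_notMem
    (fun hsj => hj (eq_of_mem_cell hN hsj hs)) _) (by simp)]
  exact indicator_of_mem hs _

lemma measurableSet_cell {i : ℕ} : MeasurableSet (cell N i) := measurableSet_Ico

lemma volume_real_cell (i : Fin N) : volume.real (cell N i) = (N : ℝ)⁻¹ := by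
  rw [cell, Real.volume_real_Ico, add_div, add_sub_cancel_left,
    max_eq_left (by positivity : (0 : ℝ) ≤ 1 / N), one_div]

lemma muI_eq_restrict_Ico : muI = volume.restrict (Ico 0 1) :=
  (Measure.restrict_congr_set Ico_ae_eq_Icc).symm

instance : IsProbabilityMeasure muI := ⟨by simp [muI]⟩

lemma muI_real_cell (i : Fin N) : muI.real (cell N i) = (N : ℝ)⁻¹ := by
  rw [muI_eq_restrict_Ico, measureReal_restrict_apply measurableSet_cell,
    inter_eq_left.2 (cell_subset_Ico i), volume_real_cell]

lemma integral_pi_muI_of_eq_on_cells {k : ℕ} (hN : 0 < N) {F : (Fin k → ℝ) → ℝ}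
    (c : (Fin k → Fin N) → ℝ) (hF : ∀ σ j, (∀ l, σ l ∈ cell N (j l)) → F σ = c j) :
    ∫ σ, F σ ∂(Measure.pi fun _ => muI) = ((N : ℝ) ^ k)⁻¹ * ∑ j, c j := by
  set B : (Fin k → Fin N) → Set (Fin k → ℝ) := fun j => univ.pi fun l => cell N (j l)
  have hB : ∀ j, MeasurableSet (B j) := fun j => .univ_pi fun l => measurableSet_cell
  have hae : F =ᵐ[Measure.pi fun _ => muI] fun σ => ∑ j, (B j).indicator (fun _ => c j) σ := by
    have h01 : ∀ᵐ σ ∂(Measure.pi fun _ : Fin k => muI), ∀ l, σ l ∈ Ico (0 : ℝ) 1 :=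
      ae_all_iff.2 fun l => (Measure.quasiMeasurePreserving_eval _ l).ae
        (muI_eq_restrict_Ico ▸ ae_restrict_mem measurableSet_Ico)
    filter_upwards [h01] with σ hσ
    choose j hj using fun l => exists_mem_cell hN (hσ l)
    rw [hF σ j hj, Finset.sum_eq_single j (fun j' _ hj' => indicator_of_notMem
      (fun h => hj' (funext fun l => eq_of_mem_cell hN (mem_univ_pi.1 h l) (hj l))) _) (by simp)]
    exact (indicator_of_mem (mem_univ_pi.2 hj) (fun _ => c j)).symm
  rw [integral_congr_ae hae, integral_finsetSum _ fun j _ => (integrable_const _).indicator (hB j),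
    Finset.mul_sum]
  refine Finset.sum_congr rfl fun j _ => ?_
  rw [integral_indicator_const _ (hB j), smul_eq_mul, measureReal_def, Measure.pi_pi]
  simp [← measureReal_def, muI_real_cell]

end Cells

lemma natCast_mul_setIntegral_psiSk {d N k : ℕ} (hN : 0 < N) (S : (Fin (k + 1) → Euc d) → ℝ)
    (x : Fin N → Euc d) (m : Fin N → ℝ) (i : Fin N) :
    (N : ℝ) * ∫ s in Ico ((i : ℝ) / N) (((i : ℝ) + 1) / N), psiSk k S s (Pc N x) (Pc N m) =
      massRate S x m i := by
  change (N : ℝ) * ∫ s in cell N i, _ = _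
  have hconst : EqOn (fun s => psiSk k S s (Pc N x) (Pc N m)) (fun _ => massRate S x m i)
      (cell N i) := fun s hs => by
    simp only [psiSk, massRate, meanInteraction, Pc_of_mem_cell hN _ hs]
    congr 1
    refine integral_pi_muI_of_eq_on_cells hN _ fun σ j hj => ?_
    simp only [Pc_of_mem_cell hN _ (hj _), Fin.comp_cons]
    rfl
  rw [setIntegral_congr_fun measurableSet_cell hconst, setIntegral_const, volume_real_cell,
    smul_eq_mul, ← mul_assoc, mul_inv_cancel₀ (Nat.cast_pos.2 hN).ne', one_mul]

lemma microSolS_iff {d N k : ℕ} (hN : 0 < N) {T : ℝ} {φ : Euc d → Euc d}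
    {S : (Fin (k + 1) → Euc d) → ℝ} {xinit : Fin N → Euc d} {minit : Fin N → ℝ}
    {x : ℝ → Fin N → Euc d} {m : ℝ → Fin N → ℝ} :
    MicroSolS T N k φ S xinit minit x m ↔ (x 0, m 0) = (xinit, minit) ∧ ∀ t ∈ Icc 0 T,
      HasDerivWithinAt (fun τ => (x τ, m τ)) (microField φ S (x t, m t)) (Icc 0 T) t := by
  simp only [MicroSolS, Prod.mk.injEq, and_assoc, natCast_mul_setIntegral_psiSk hN]
  refine and_congr_right fun _ => and_congr_right fun _ => forall₂_congr fun t _ =>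
    ⟨fun h => ?_, fun h i => ?_⟩
  · exact (hasDerivWithinAt_pi.2 fun i => (h i).1).prodMk (hasDerivWithinAt_pi.2 fun i => (h i).2)
  · exact ⟨hasDerivWithinAt_pi.1 h.fst i, hasDerivWithinAt_pi.1 h.snd i⟩

section Truncation

variable {E : Type*} [NormedAddCommGroup E] [NormedSpace ℝ E] [ProperSpace E] {N k : ℕ}
  {φ : E → E} {S : (Fin (k + 1) → E) → ℝ} {T R : ℝ} {x₀ : Fin N → E} {m₀ : Fin N → ℝ}
  {α : ℝ → (Fin N → E) × (Fin N → ℝ)}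

/-- The retraction rescales the state by a factor `c t ∈ [0, 1]`, which keeps the mass equations
linear in `m_i` and only shrinks the velocities. -/
lemma invariants_of_hasDerivWithinAt_microField_radialRetraction (hN : 0 < N) {Kφ : ℝ≥0}
    (hφ : LipschitzWith Kφ φ) (hφ0 : φ 0 = 0) (hS : Continuous S)
    (hskew : ∃ a b : Fin (k + 1), ∀ y, S y = -S (y ∘ Equiv.swap a b))
    (hsum : ∑ i, m₀ i = N) (hpos : ∀ i, 0 < m₀ i) (hR : 0 ≤ R) (hα0 : α 0 = (x₀, m₀))
    (hα : ∀ t ∈ Icc 0 T,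
      HasDerivWithinAt α (microField φ S (radialRetraction R (α t))) (Icc 0 T) t) :
    ∀ t ∈ Icc 0 T, (∀ i, 0 < (α t).2 i) ∧ ∑ i, (α t).2 i = N ∧
      ‖(α t).1‖ ≤ ‖x₀‖ * Real.exp (2 * Kφ * T) := by
  choose c hc0 hc1 hc using fun t => radialRetraction_eq_smul hR (α t)
  have hm : ∀ i, ∀ t ∈ Icc 0 T, HasDerivWithinAt (fun τ => (α τ).2 i)
      (massRate S (c t • (α t).1) (c t • (α t).2) i) (Icc 0 T) t := fun i t ht => by
    simpa [hc, microField] using hasDerivWithinAt_pi.1 (hα t ht).snd i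
  have hsum_t : ∀ t ∈ Icc 0 T, ∑ i, (α t).2 i = N := by
    have h := eq_of_forall_mem_Icc_hasDerivWithinAt_zero (f := fun τ => ∑ i, (α τ).2 i)
      fun t ht => by
        simpa [sum_massRate_eq_zero hskew] using
          HasDerivWithinAt.fun_sum (u := Finset.univ) fun i _ => hm i t ht
    intro t ht
    rw [h t ht, hα0, hsum]
  obtain ⟨C, hC⟩ := (isCompact_closedBall (0 : (Fin N → E) × (Fin N → ℝ)) R
    ).exists_bound_of_continuousOn (continuous_pi (continuous_meanInteraction hS)).continuousOn
  have hpos_t : ∀ i, ∀ t ∈ Icc 0 T, 0 < (α t).2 i := by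
    intro i
    refine pos_of_forall_mem_Icc_hasDerivWithinAt_mul (K := C.toNNReal)
      (c := fun t => c t * meanInteraction S (c t • (α t).1) (c t • (α t).2) i)
      (fun t ht => by simpa [massRate, mul_comm, mul_left_comm, mul_assoc] using hm i t ht)
      (fun t _ => ?_) (by rw [hα0]; exact hpos i)
    have hball : c t • α t ∈ closedBall 0 R :=
      mem_closedBall_zero_iff.2 (hc t ▸ norm_radialRetraction_le hR (α t))
    have hmean := (norm_le_pi_norm _ i).trans (hC _ hball)
    rw [Real.norm_eq_abs] at hmean
    rw [abs_mul, abs_of_nonneg (hc0 t)]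
    exact (mul_le_of_le_one_left (abs_nonneg _) (hc1 t)).trans
      (hmean.trans (Real.le_coe_toNNReal C))
  have hx : ∀ t ∈ Icc 0 T, HasDerivWithinAt (fun τ => (α τ).1)
      (velocity φ (c t • (α t).1) (c t • (α t).2)) (Icc 0 T) t := fun t ht => by
    simpa [hc, microField] using (hα t ht).fst
  have hx_bound := norm_le_mul_exp_of_norm_deriv_le hx fun t ht =>
    norm_velocity_smul_le hN hφ hφ0 (hc0 t) (hc1 t) _ (fun j => (hpos_t j t ht).le) (hsum_t t ht)
  refine fun t ht => ⟨fun i => hpos_t i t ht, hsum_t t ht, (hx_bound t ht).trans ?_⟩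
  rw [hα0, sub_zero]
  gcongr
  exact ht.2

lemma exists_microField_solution (hN : 0 < N) {Kφ KS : ℝ≥0} (hφ : LipschitzWith Kφ φ)
    (hφ0 : φ 0 = 0) (hS : LipschitzWith KS S)
    (hskew : ∃ a b : Fin (k + 1), ∀ y, S y = -S (y ∘ Equiv.swap a b))
    (hsum : ∑ i, m₀ i = N) (hpos : ∀ i, 0 < m₀ i) (hT : 0 ≤ T) :
    ∃ α : ℝ → (Fin N → E) × (Fin N → ℝ), α 0 = (x₀, m₀) ∧ ∀ t ∈ Icc 0 T,
      HasDerivWithinAt α (microField φ S (α t)) (Icc 0 T) t ∧ (∀ i, 0 < (α t).2 i) ∧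
        ∑ i, (α t).2 i = N ∧ ‖(α t).1‖ ≤ ‖x₀‖ * Real.exp (2 * Kφ * T) := by
  set R := max (‖x₀‖ * Real.exp (2 * Kφ * T)) N
  have hR : 0 ≤ R := le_max_of_le_right (Nat.cast_nonneg N)
  obtain ⟨α, hα0, hα⟩ := (locallyLipschitz_microField hφ hS
    ).exists_forall_mem_Icc_hasDerivWithinAt_comp_radialRetraction hR hT (x₀, m₀)
  have hinv := invariants_of_hasDerivWithinAt_microField_radialRetraction hN hφ hφ0 hS.continuous
    hskew hsum hpos hR hα0 hα
  refine ⟨α, hα0, fun t ht => ⟨?_, hinv t ht⟩⟩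
  obtain ⟨hpos_t, hsum_t, hx_t⟩ := hinv t ht
  have hm_t : ‖(α t).2‖ ≤ N := hsum_t ▸ pi_norm_le_sum_of_nonneg fun i => (hpos_t i).le
  have hαR : ‖α t‖ ≤ R :=
    norm_prod_le_iff.2 ⟨hx_t.trans (le_max_left _ _), hm_t.trans (le_max_right _ _)⟩
  simpa [radialRetraction_of_norm_le hαR] using hα t ht

end Truncation

theorem stmt13_general {d N : ℕ} (hN : 0 < N) (T : ℝ) (hT : 0 < T) (k : ℕ)
    (xinit : Fin N → Euc d) (minit : Fin N → ℝ)
    (hsum : ∑ i, minit i = N) (hpos : ∀ i, 0 < minit i)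
    (φ : Euc d → Euc d) (Lφ : ℝ≥0) (hφ : LipschitzWith Lφ φ) (hφ0 : φ 0 = 0)
    (S : (Fin (k+1) → Euc d) → ℝ) (LS : ℝ)
    (hSlip : ∀ y z, |S y - S z| ≤ LS * ∑ i, ‖y i - z i‖)
    (hSskew : ∃ i j : Fin (k+1), ∀ y, S y = - S (y ∘ Equiv.swap i j)) :
    ∃ (x : ℝ → Fin N → Euc d) (m : ℝ → Fin N → ℝ),
      MicroSolS T N k φ S xinit minit x m ∧
      (∀ t ∈ Set.Icc (0:ℝ) T, ∀ i : Fin N, 0 < m t i) ∧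
      (∀ t ∈ Set.Icc (0:ℝ) T, ∑ i, m t i = N) ∧
      (∃ Xbar Mbar : ℝ, ∀ t ∈ Set.Icc (0:ℝ) T, ∀ i : Fin N,
        ‖x t i‖ ≤ Xbar ∧ |m t i| ≤ Mbar) ∧
      ∀ x' m', MicroSolS T N k φ S xinit minit x' m' →
        ∀ t ∈ Set.Icc (0:ℝ) T, x' t = x t ∧ m' t = m t := by
  have hS := lipschitzWith_of_abs_sub_le_mul_sum_norm hSlip
  obtain ⟨α, hα0, hα⟩ := exists_microField_solution hN hφ hφ0 hS hSskew hsum hpos hT.le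
  refine ⟨fun τ => (α τ).1, fun τ => (α τ).2,
    (microSolS_iff hN).2 ⟨hα0, fun t ht => (hα t ht).1⟩,
    fun t ht => (hα t ht).2.1, fun t ht => (hα t ht).2.2.1,
    ⟨‖xinit‖ * Real.exp (2 * Lφ * T), N, fun t ht i => ⟨?_, ?_⟩⟩, fun x' m' h' t ht => ?_⟩
  · exact (norm_le_pi_norm _ i).trans (hα t ht).2.2.2
  · obtain ⟨hpos_t, hsum_t, -⟩ := (hα t ht).2
    rw [← Real.norm_eq_abs, ← hsum_t]
    exact (norm_le_pi_norm _ i).trans (pi_norm_le_sum_of_nonneg fun j => (hpos_t j).le)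
  · obtain ⟨h0', hd'⟩ := (microSolS_iff hN).1 h'
    exact Prod.mk.inj ((locallyLipschitz_microField hφ hS).eqOn_of_forall_mem_Icc_hasDerivWithinAt
      hd' (fun t ht => (hα t ht).1) (h0'.trans hα0.symm) ht)

/-- well-posedness of the microscopic system with mass dynamics coming
from `ψ_{S,k}`, with positivity of the weights, conservation of the total weight, and
uniform bounds. -/
theorem stmt13 {d N : ℕ} (hN : 0 < N) (T : ℝ) (hT : 0 < T) (k : ℕ)
    (xinit : Fin N → Euc d) (minit : Fin N → ℝ)
    (hsum : ∑ i, minit i = N) (hpos : ∀ i, 0 < minit i)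
    (φ : Euc d → Euc d) (Lφ : ℝ≥0) (hφ : LipschitzWith Lφ φ) (hφ0 : φ 0 = 0)
    (S : (Fin (k+1) → Euc d) → ℝ) (Sbar LS : ℝ)
    (hSb : ∀ y, |S y| ≤ Sbar)
    (hSlip : ∀ y z, |S y - S z| ≤ LS * ∑ i, ‖y i - z i‖)
    (hSskew : ∃ i j : Fin (k+1), ∀ y, S y = - S (y ∘ Equiv.swap i j)) :
    ∃ (x : ℝ → Fin N → Euc d) (m : ℝ → Fin N → ℝ),
      MicroSolS T N k φ S xinit minit x m ∧
      (∀ t ∈ Set.Icc (0:ℝ) T, ∀ i : Fin N, 0 < m t i) ∧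
      (∀ t ∈ Set.Icc (0:ℝ) T, ∑ i, m t i = N) ∧
      (∃ Xbar Mbar : ℝ, ∀ t ∈ Set.Icc (0:ℝ) T, ∀ i : Fin N,
        ‖x t i‖ ≤ Xbar ∧ |m t i| ≤ Mbar) ∧
      ∀ x' m', MicroSolS T N k φ S xinit minit x' m' →
        ∀ t ∈ Set.Icc (0:ℝ) T, x' t = x t ∧ m' t = m t :=
  stmt13_general hN T hT k xinit minit hsum hpos φ Lφ hφ hφ0 S LS hSlip hSskew
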